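/- Suppose Σ̄ ∈ P(X) is an irreducible collection of partial splits of X that is closed under the M-rule θ_M (i.e. every application of θ_M to Σ̄ is trivial), and suppose Σ_r, Σ_{r+1} ∈ P(X) with Σ_r ⪯ Σ̄ and Σ_{r+1} obtained from Σ_r by a single application of θ_M. Then Σ_{r+1} ⪯ Σ̄. -/

import Mathlib

/-!
Common definitions: partial splits of a finite set `X`, modelled as unordered
pairs (`Sym2`) of nonempty disjoint subsets of `X`; the `M`-, `Y`- and `Z`-
closure rules; weak compatibility; `X`-cycles and display; split closure
sequences and split closures.
-/

variable {X : Type*}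

/-- `S` is a partial split of `X`: an unordered pair of nonempty disjoint subsets of `X`. -/
def IsPartialSplit (S : Sym2 (Set X)) : Prop :=
  ∃ A B : Set X, S = s(A, B) ∧ A.Nonempty ∧ B.Nonempty ∧ Disjoint A B

/-- `S` is a full split of `X`: a partial split whose two parts cover `X`. -/
def IsFullSplit (S : Sym2 (Set X)) : Prop :=
  ∃ A B : Set X, S = s(A, B) ∧ A.Nonempty ∧ B.Nonempty ∧ Disjoint A B ∧ A ∪ B = Set.univ

/-- The partial split `S` extends the partial split `T`. -/
def SplitExtends (S T : Sym2 (Set X)) : Prop :=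
  ∃ A B C D : Set X, S = s(A, B) ∧ T = s(C, D) ∧ C ⊆ A ∧ D ⊆ B

/-- `Sig ⪯ Sig'`: every partial split of `Sig` is extended by one of `Sig'`. -/
def Preceq (Sig Sig' : Set (Sym2 (Set X))) : Prop :=
  ∀ S ∈ Sig, ∃ T ∈ Sig', SplitExtends T S

/-- `Sig⁻`: the set obtained from `Sig` by removing all redundant partial splits,
i.e. those extended by a different element of `Sig`. -/
def sreduce (Sig : Set (Sym2 (Set X))) : Set (Sym2 (Set X)) :=
  {S | S ∈ Sig ∧ ¬ ∃ T ∈ Sig, T ≠ S ∧ SplitExtends T S}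

/-- `Sig ∈ P(X)`: `Sig` is an irreducible collection of partial splits of `X`. -/
def InPX (Sig : Set (Sym2 (Set X))) : Prop :=
  (∀ S ∈ Sig, IsPartialSplit S) ∧ sreduce Sig = Sig

/-- Two partial splits are compatible if some part of one is disjoint from some part
of the other. -/
def SplitCompatible (S T : Sym2 (Set X)) : Prop :=
  ∃ A B C D : Set X, S = s(A, B) ∧ T = s(C, D) ∧ A ∩ C = ∅

/-- Weak compatibility of a (multi)triple of partial splits: for every choice of parts,
one of the four distinguished triple intersections is empty. -/
def WeaklyCompatTriple (S1 S2 S3 : Sym2 (Set X)) : Prop :=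
  ∀ A1 B1 A2 B2 A3 B3 : Set X,
    S1 = s(A1, B1) → S2 = s(A2, B2) → S3 = s(A3, B3) →
    A1 ∩ A2 ∩ A3 = ∅ ∨ B1 ∩ B2 ∩ A3 = ∅ ∨ B1 ∩ A2 ∩ B3 = ∅ ∨ A1 ∩ B2 ∩ B3 = ∅

/-- A collection of partial splits is weakly compatible if every three of its members are. -/
def WeaklyCompatible (Sig : Set (Sym2 (Set X))) : Prop :=
  ∀ S1 ∈ Sig, ∀ S2 ∈ Sig, ∀ S3 ∈ Sig, WeaklyCompatTriple S1 S2 S3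

/-- Condition of the `M`-rule for the parts `A1|B1`, `A2|B2`. -/
def mCond (A1 B1 A2 B2 : Set X) : Prop :=
  (A1 ∩ A2).Nonempty ∧ (B1 ∩ B2).Nonempty

/-- Output of the `M`-rule applied with respect to the parts `A1|B1`, `A2|B2`. -/
def mOut (A1 B1 A2 B2 : Set X) : Set (Sym2 (Set X)) :=
  {s(A1, B1), s(A2, B2), s(A1 ∩ A2, B1 ∪ B2), s(B1 ∩ B2, A1 ∪ A2)}

/-- Condition of the `Y`-rule for the parts `A1|B1`, `A2|B2`, `A3|B3`. -/
def yCond (A1 B1 A2 B2 A3 B3 : Set X) : Prop :=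
  (A1 ∩ A2 ∩ A3).Nonempty ∧ (B1 ∩ B2 ∩ A3).Nonempty ∧
    (B1 ∩ A2 ∩ B3).Nonempty ∧ A1 ∩ B2 ∩ B3 = ∅

/-- Output of the `Y`-rule applied with respect to the parts `A1|B1`, `A2|B2`, `A3|B3`. -/
def yOut (A1 B1 A2 B2 A3 B3 : Set X) : Set (Sym2 (Set X)) :=
  {s(B1 ∪ (B2 ∩ B3), A1), s(A2 ∪ (A1 ∩ B3), B2), s(A3 ∪ (A1 ∩ B2), B3)}

/-- Condition of the `Z`-rule for the parts `A1|B1`, `A2|B2`. -/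
def zCond (A1 B1 A2 B2 : Set X) : Prop :=
  (A1 ∩ A2).Nonempty ∧ (A2 ∩ B1).Nonempty ∧ (B1 ∩ B2).Nonempty ∧ A1 ∩ B2 = ∅

/-- Output of the `Z`-rule applied with respect to the parts `A1|B1`, `A2|B2`. -/
def zOut (A1 B1 A2 B2 : Set X) : Set (Sym2 (Set X)) :=
  {s(B1 ∪ B2, A1), s(B2, A1 ∪ A2)}

/-- `Sig'` is obtained from `Sig` by a single application of the `Y`-rule. -/
def yStep (Sig Sig' : Set (Sym2 (Set X))) : Prop :=
  ∃ A1 B1 A2 B2 A3 B3 : Set X,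
    s(A1, B1) ∈ Sig ∧ s(A2, B2) ∈ Sig ∧ s(A3, B3) ∈ Sig ∧
    s(A1, B1) ≠ s(A2, B2) ∧ s(A1, B1) ≠ s(A3, B3) ∧ s(A2, B2) ≠ s(A3, B3) ∧
    yCond A1 B1 A2 B2 A3 B3 ∧
    Sig' = sreduce (Sig ∪ yOut A1 B1 A2 B2 A3 B3)

/-- `Sig'` is obtained from `Sig` by a single application of the `M`-rule. -/
def mStep (Sig Sig' : Set (Sym2 (Set X))) : Prop :=
  ∃ A1 B1 A2 B2 : Set X,
    s(A1, B1) ∈ Sig ∧ s(A2, B2) ∈ Sig ∧ s(A1, B1) ≠ s(A2, B2) ∧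
    mCond A1 B1 A2 B2 ∧
    Sig' = sreduce (Sig ∪ mOut A1 B1 A2 B2)

/-- `Sig'` is obtained from `Sig` by a single non-trivial application of the `Y`-rule. -/
def yStepNT (Sig Sig' : Set (Sym2 (Set X))) : Prop :=
  ∃ A1 B1 A2 B2 A3 B3 : Set X,
    s(A1, B1) ∈ Sig ∧ s(A2, B2) ∈ Sig ∧ s(A3, B3) ∈ Sig ∧
    s(A1, B1) ≠ s(A2, B2) ∧ s(A1, B1) ≠ s(A3, B3) ∧ s(A2, B2) ≠ s(A3, B3) ∧
    yCond A1 B1 A2 B2 A3 B3 ∧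
    ¬ Preceq (sreduce (yOut A1 B1 A2 B2 A3 B3)) Sig ∧
    Sig' = sreduce (Sig ∪ yOut A1 B1 A2 B2 A3 B3)

/-- `Sig'` is obtained from `Sig` by a single non-trivial application of the `M`-rule. -/
def mStepNT (Sig Sig' : Set (Sym2 (Set X))) : Prop :=
  ∃ A1 B1 A2 B2 : Set X,
    s(A1, B1) ∈ Sig ∧ s(A2, B2) ∈ Sig ∧ s(A1, B1) ≠ s(A2, B2) ∧
    mCond A1 B1 A2 B2 ∧
    ¬ Preceq (sreduce (mOut A1 B1 A2 B2)) Sig ∧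
    Sig' = sreduce (Sig ∪ mOut A1 B1 A2 B2)

/-- `Sig` is closed under the `Y`-rule: every application of the `Y`-rule to `Sig` is trivial. -/
def yClosed (Sig : Set (Sym2 (Set X))) : Prop :=
  ∀ A1 B1 A2 B2 A3 B3 : Set X,
    s(A1, B1) ∈ Sig → s(A2, B2) ∈ Sig → s(A3, B3) ∈ Sig →
    s(A1, B1) ≠ s(A2, B2) → s(A1, B1) ≠ s(A3, B3) → s(A2, B2) ≠ s(A3, B3) →
    yCond A1 B1 A2 B2 A3 B3 →
    Preceq (sreduce (yOut A1 B1 A2 B2 A3 B3)) Sig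

/-- `Sig` is closed under the `M`-rule: every application of the `M`-rule to `Sig` is trivial. -/
def mClosed (Sig : Set (Sym2 (Set X))) : Prop :=
  ∀ A1 B1 A2 B2 : Set X,
    s(A1, B1) ∈ Sig → s(A2, B2) ∈ Sig → s(A1, B1) ≠ s(A2, B2) →
    mCond A1 B1 A2 B2 →
    Preceq (sreduce (mOut A1 B1 A2 B2)) Sig

/-- A split closure sequence for `Sig` of length `n` with respect to the property `P` and
the non-trivial single-application relation `stepNT`: a strictly `⪯`-increasing sequence
in `P(X)` starting at `Sig` in which every term satisfying `P` is followed by the result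
of one non-trivial application of the rule. -/
def IsClosureSeq (P : Set (Sym2 (Set X)) → Prop)
    (stepNT : Set (Sym2 (Set X)) → Set (Sym2 (Set X)) → Prop)
    (Sig : Set (Sym2 (Set X))) (n : ℕ) (f : ℕ → Set (Sym2 (Set X))) : Prop :=
  f 0 = Sig ∧ (∀ i ≤ n, InPX (f i)) ∧
    (∀ i < n, P (f i) ∧ stepNT (f i) (f (i + 1)) ∧
      Preceq (f i) (f (i + 1)) ∧ f i ≠ f (i + 1))

/-- `cl` is a split closure of `Sig` (with `cl = none` playing the role of `ω`):
the last element of a split closure sequence for `Sig`, which either satisfies `P` and is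
closed under the rule, or fails `P`, in which case it is replaced by `ω`. -/
def IsSplitClosure (P : Set (Sym2 (Set X)) → Prop)
    (stepNT : Set (Sym2 (Set X)) → Set (Sym2 (Set X)) → Prop)
    (closed : Set (Sym2 (Set X)) → Prop)
    (Sig : Set (Sym2 (Set X))) (cl : Option (Set (Sym2 (Set X)))) : Prop :=
  ∃ (n : ℕ) (f : ℕ → Set (Sym2 (Set X))),
    IsClosureSeq P stepNT Sig n f ∧
    ((P (f n) ∧ closed (f n) ∧ cl = some (f n)) ∨ (¬ P (f n) ∧ cl = none))

/-- Split closure with respect to the `Y`-rule, `(P)` being weak compatibility. -/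
def IsYClosure (Sig : Set (Sym2 (Set X))) (cl : Option (Set (Sym2 (Set X)))) : Prop :=
  IsSplitClosure WeaklyCompatible yStepNT yClosed Sig cl

/-- Split closure with respect to the `M`-rule, `(P)` holding for all collections. -/
def IsMClosure (Sig : Set (Sym2 (Set X))) (cl : Option (Set (Sym2 (Set X)))) : Prop :=
  IsSplitClosure (fun _ => True) mStepNT mClosed Sig cl

/-- Split closure with respect to the combined `M/Y`-rule, `(P)` being weak compatibility. -/
def IsMYClosure (Sig : Set (Sym2 (Set X))) (cl : Option (Set (Sym2 (Set X)))) : Prop :=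
  IsSplitClosure WeaklyCompatible
    (fun s s' => mStepNT s s' ∨ yStepNT s s') (fun s => mClosed s ∧ yClosed s) Sig cl

/-- `C` is an `X`-cycle: a connected graph on the vertex set `X` (`|X| ≥ 3`) in which
every vertex has degree `2`. -/
def IsXCycle (C : SimpleGraph X) : Prop :=
  C.Connected ∧ 3 ≤ Nat.card X ∧ ∀ v : X, (C.neighborSet v).ncard = 2

/-- The partial split `S` is displayed by the `X`-cycle `C`: there are two distinct
edges of `C` whose deletion leaves one component containing one part of `S` and
another component containing the other part. -/
def DisplaysSplit (C : SimpleGraph X) (S : Sym2 (Set X)) : Prop :=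
  ∃ A B : Set X, S = s(A, B) ∧
    ∃ e1 e2 : Sym2 X, e1 ∈ C.edgeSet ∧ e2 ∈ C.edgeSet ∧ e1 ≠ e2 ∧
      ∃ c1 c2 : (C.deleteEdges {e1, e2}).ConnectedComponent,
        c1 ≠ c2 ∧ A ⊆ c1.supp ∧ B ⊆ c2.supp

/-- A collection of partial splits is displayed by `C` if each of its members is. -/
def DisplaysColl (C : SimpleGraph X) (Sig : Set (Sym2 (Set X))) : Prop :=
  ∀ S ∈ Sig, DisplaysSplit C S

/-- `cl ≠ ω` and the underlying collection is displayed by `C`. -/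
def OptionDisplays (C : SimpleGraph X) (cl : Option (Set (Sym2 (Set X)))) : Prop :=
  ∃ Sig, cl = some Sig ∧ DisplaysColl C Sig

/-- The ground set `A ∪ B` of a partial split `A|B`. -/
def splitGround (S : Sym2 (Set X)) : Set X :=
  ⋃₀ {A : Set X | A ∈ S}

/-- Membership in `P_ω(X) = P(X) ∪ {ω}`. -/
def InPOmega (x : Option (Set (Sym2 (Set X)))) : Prop :=
  x = none ∨ ∃ Sig, x = some Sig ∧ InPX Sig

/-- The order `⪯` on `P_ω(X)`, with `Sig ⪯ ω` for all `Sig` and `ω ⪯ ω`. -/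
def PreceqO (x y : Option (Set (Sym2 (Set X)))) : Prop :=
  y = none ∨ ∃ Sig Sig', x = some Sig ∧ y = some Sig' ∧ Preceq Sig Sig'

/-- Split closure as a relation on `P_ω(X)`, with `⟨ω⟩ = ω`. -/
def ClosO (cls : Set (Sym2 (Set X)) → Option (Set (Sym2 (Set X))) → Prop)
    (x y : Option (Set (Sym2 (Set X)))) : Prop :=
  (x = none ∧ y = none) ∨ ∃ Sig, x = some Sig ∧ cls Sig y

/-!
The `M`-rule is monotone: if `A₁|B₁` and `A₂|B₂` are extended by `A₁'|B₁'` and `A₂'|B₂'`,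
each output of the rule on the former is extended by the corresponding output on the latter.
Hence every new split of `Σ_{r+1}` is extended by an output of the rule on two members of `Σ̄`,
and these are extended by members of `Σ̄` because `Σ̄` is closed. When both inputs are extended
by the same member `A|B` of `Σ̄`, the `M`-condition and `A ∩ B = ∅` force the orientations to
agree, and then `A|B` extends all the outputs itself.
-/

section SplitExtends

variable {S T U : Sym2 (Set X)} {A B : Set X}

theorem splitExtends_refl (S : Sym2 (Set X)) : SplitExtends S S := by
  induction S with
  | h A B => exact ⟨A, B, A, B, rfl, rfl, subset_rfl, subset_rfl⟩

theorem exists_eq_mk_of_splitExtends_mk (h : SplitExtends T s(A, B)) :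
    ∃ P Q : Set X, T = s(P, Q) ∧ A ⊆ P ∧ B ⊆ Q := by
  obtain ⟨P, Q, C, D, rfl, hCD, hC, hD⟩ := h
  rcases Sym2.eq_iff.1 hCD with ⟨rfl, rfl⟩ | ⟨rfl, rfl⟩
  · exact ⟨P, Q, rfl, hC, hD⟩
  · exact ⟨Q, P, Sym2.eq_swap, hD, hC⟩

theorem SplitExtends.trans (hST : SplitExtends S T) (hTU : SplitExtends T U) :
    SplitExtends S U := by
  obtain ⟨C, D, E, F, rfl, rfl, hE, hF⟩ := hTU
  obtain ⟨P, Q, rfl, hC, hD⟩ := exists_eq_mk_of_splitExtends_mk hST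
  exact ⟨P, Q, E, F, rfl, rfl, hE.trans hC, hF.trans hD⟩

theorem SplitExtends.antisymm (hST : SplitExtends S T) (hTS : SplitExtends T S) : S = T := by
  obtain ⟨C, D, E, F, rfl, rfl, hE, hF⟩ := hTS
  obtain ⟨P, Q, hPQ, hC, hD⟩ := exists_eq_mk_of_splitExtends_mk hST
  rcases Sym2.eq_iff.1 hPQ with ⟨rfl, rfl⟩ | ⟨rfl, rfl⟩
  · rw [hC.antisymm hE, hD.antisymm hF]
  · rw [hC.antisymm (hF.trans (hD.trans hE)), hD.antisymm (hE.trans (hC.trans hF)),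
      Sym2.eq_swap]

end SplitExtends

theorem IsPartialSplit.disjoint {A B : Set X} (h : IsPartialSplit s(A, B)) : Disjoint A B := by
  obtain ⟨C, D, hCD, -, -, hdisj⟩ := h
  rcases Sym2.eq_iff.1 hCD with ⟨rfl, rfl⟩ | ⟨rfl, rfl⟩
  exacts [hdisj, hdisj.symm]

section Preceq

variable {Sig Sig' Sig'' : Set (Sym2 (Set X))}

theorem Preceq.trans (h : Preceq Sig Sig') (h' : Preceq Sig' Sig'') : Preceq Sig Sig'' := by
  intro S hS
  obtain ⟨T, hT, hST⟩ := h S hS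
  obtain ⟨U, hU, hTU⟩ := h' T hT
  exact ⟨U, hU, hTU.trans hST⟩

theorem Preceq.mono_left (hsub : Sig ⊆ Sig') (h : Preceq Sig' Sig'') : Preceq Sig Sig'' :=
  fun S hS => h S (hsub hS)

theorem Preceq.union (h : Preceq Sig Sig'') (h' : Preceq Sig' Sig'') :
    Preceq (Sig ∪ Sig') Sig'' := by
  rintro S (hS | hS)
  exacts [h S hS, h' S hS]

theorem sreduce_subset (Sig : Set (Sym2 (Set X))) : sreduce Sig ⊆ Sig :=
  fun _ hS => hS.1

/-- Proper extension is a strict order, so on a finite collection every split is extended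
by a maximal one, i.e. by a non-redundant one. -/
theorem Set.Finite.preceq_sreduce (hfin : Sig.Finite) : Preceq Sig (sreduce Sig) := by
  let r : Sym2 (Set X) → Sym2 (Set X) → Prop := fun T U => SplitExtends T U ∧ T ≠ U
  have : IsStrictOrder _ r :=
    { irrefl := fun _ h => h.2 rfl
      trans := fun _ _ _ h₁ h₂ => ⟨h₁.1.trans h₂.1, fun h =>
        h₁.2 (h₁.1.antisymm (h ▸ h₂.1))⟩ }
  intro S hS
  have hwf := (hfin.subset (Set.sep_subset Sig (SplitExtends · S))).wellFoundedOn (r := r)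
  obtain ⟨T, ⟨hT, hTS⟩, hmax⟩ :=
    (Set.wellFoundedOn_iff.1 hwf).has_min {T ∈ Sig | SplitExtends T S} ⟨S, hS, splitExtends_refl S⟩
  refine ⟨T, ⟨hT, ?_⟩, hTS⟩
  rintro ⟨U, hU, hUT, hUext⟩
  exact hmax U ⟨hU, hUext.trans hTS⟩ ⟨⟨hUext, hUT⟩, ⟨hU, hUext.trans hTS⟩, hT, hTS⟩

end Preceq

section MRule

variable {A1 B1 A2 B2 A1' B1' A2' B2' : Set X}

theorem mOut_finite (A1 B1 A2 B2 : Set X) : (mOut A1 B1 A2 B2).Finite := by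
  simp only [mOut, Set.finite_insert, Set.finite_singleton]

theorem mCond.mono (hc : mCond A1 B1 A2 B2) (hA1 : A1 ⊆ A1') (hB1 : B1 ⊆ B1')
    (hA2 : A2 ⊆ A2') (hB2 : B2 ⊆ B2') : mCond A1' B1' A2' B2' :=
  ⟨hc.1.mono (Set.inter_subset_inter hA1 hA2), hc.2.mono (Set.inter_subset_inter hB1 hB2)⟩

theorem mOut_preceq_mOut (hA1 : A1 ⊆ A1') (hB1 : B1 ⊆ B1') (hA2 : A2 ⊆ A2')
    (hB2 : B2 ⊆ B2') : Preceq (mOut A1 B1 A2 B2) (mOut A1' B1' A2' B2') := by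
  rintro S (rfl | rfl | rfl | rfl)
  · exact ⟨_, Or.inl rfl, _, _, _, _, rfl, rfl, hA1, hB1⟩
  · exact ⟨_, Or.inr (Or.inl rfl), _, _, _, _, rfl, rfl, hA2, hB2⟩
  · exact ⟨_, Or.inr (Or.inr (Or.inl rfl)), _, _, _, _, rfl, rfl,
      Set.inter_subset_inter hA1 hA2, Set.union_subset_union hB1 hB2⟩
  · exact ⟨_, Or.inr (Or.inr (Or.inr rfl)), _, _, _, _, rfl, rfl,
      Set.inter_subset_inter hB1 hB2, Set.union_subset_union hA1 hA2⟩

theorem mOut_preceq_of_mClosed {Sig : Set (Sym2 (Set X))}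
    (hsplit : ∀ S ∈ Sig, IsPartialSplit S) (hcl : mClosed Sig)
    (h1 : s(A1, B1) ∈ Sig) (h2 : s(A2, B2) ∈ Sig) (hc : mCond A1 B1 A2 B2) :
    Preceq (mOut A1 B1 A2 B2) Sig := by
  by_cases hne : s(A1, B1) = s(A2, B2)
  · rcases Sym2.eq_iff.1 hne with ⟨rfl, rfl⟩ | ⟨rfl, rfl⟩
    · have hout : mOut A1 B1 A1 B1 = {s(A1, B1)} := by
        simp [mOut, Sym2.eq_swap]
      rw [hout]
      rintro S rfl
      exact ⟨_, h1, splitExtends_refl _⟩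
    · exact absurd hc.1 ((hsplit _ h1).disjoint.inter_eq ▸ Set.not_nonempty_empty)
  · exact (mOut_finite A1 B1 A2 B2).preceq_sreduce.trans (hcl _ _ _ _ h1 h2 hne hc)

end MRule

theorem statement10_general {X : Type*} (SigBar SigR SigR1 : Set (Sym2 (Set X)))
    (hBarPX : InPX SigBar) (hBarCl : mClosed SigBar)
    (hpre : Preceq SigR SigBar)
    (hstep : mStep SigR SigR1) :
    Preceq SigR1 SigBar := by
  obtain ⟨A1, B1, A2, B2, h1, h2, -, hc, rfl⟩ := hstep
  obtain ⟨T1, hT1, hT1e⟩ := hpre _ h1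
  obtain ⟨T2, hT2, hT2e⟩ := hpre _ h2
  obtain ⟨A1', B1', rfl, hA1, hB1⟩ := exists_eq_mk_of_splitExtends_mk hT1e
  obtain ⟨A2', B2', rfl, hA2, hB2⟩ := exists_eq_mk_of_splitExtends_mk hT2e
  have hout : Preceq (mOut A1 B1 A2 B2) SigBar :=
    (mOut_preceq_mOut hA1 hB1 hA2 hB2).trans
      (mOut_preceq_of_mClosed hBarPX.1 hBarCl hT1 hT2 (hc.mono hA1 hB1 hA2 hB2))
  exact (hpre.union hout).mono_left (sreduce_subset _)

/-- if `Σ̄ ∈ P(X)` is closed under the `M`-rule, `Σ_r ∈ P(X)` with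
`Σ_r ⪯ Σ̄`, and `Σ_{r+1}` is obtained from `Σ_r` by one application of the `M`-rule,
then `Σ_{r+1} ⪯ Σ̄`. -/
theorem statement10 {X : Type*} [Fintype X] (SigBar SigR SigR1 : Set (Sym2 (Set X)))
    (hBarPX : InPX SigBar) (hBarCl : mClosed SigBar)
    (hRPX : InPX SigR) (hR1PX : InPX SigR1)
    (hpre : Preceq SigR SigBar)
    (hstep : mStep SigR SigR1) :
    Preceq SigR1 SigBar :=
  statement10_general SigBar SigR SigR1 hBarPX hBarCl hpre hstep
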